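/- Associativity of environment merging: let e₁, e₂, e₃ be well-formed suspension environments and let nl₁, ol₂, nl₂, ol₃ be natural numbers such that the environments A = ⟦⟦e₁, nl₁, ol₂, e₂⟧, nl₂ + (nl₁ ∸ ol₂), ol₃, e₃⟧ and B = ⟦e₁, nl₁, ol₂ + (ol₃ ∸ nl₂), ⟦e₂, nl₂, ol₃, e₃⟧⟧ are well-formed. Then there exists a simple environment C such that A ▷rm* C and B ▷rm* C. -/

import Mathlib

mutual
inductive STerm : Type
  | const : ℕ → STerm
  | var   : ℕ → STerm
  | app   : STerm → STerm → STerm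
  | lam   : STerm → STerm
  | susp  : STerm → ℕ → ℕ → SEnv → STerm
inductive SEnv : Type
  | nil   : SEnv
  | cons  : STerm → ℕ → SEnv → SEnv
  | merge : SEnv → ℕ → ℕ → SEnv → SEnv
end

/-- Length of an environment. -/
def SEnv.len : SEnv → ℕ
  | .nil => 0
  | .cons _ _ e => 1 + e.len
  | .merge e1 nl1 ol2 _ => e1.len + (ol2 - nl1)

/-- Level of an environment. -/
def SEnv.lev : SEnv → ℕ
  | .nil => 0
  | .cons _ n _ => n
  | .merge _ nl1 ol2 e2 => e2.lev + (nl1 - ol2)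

mutual
/-- Well-formedness of suspension terms. -/
def STerm.wf : STerm → Prop
  | .const _ => True
  | .var _ => True
  | .app t1 t2 => t1.wf ∧ t2.wf
  | .lam t => t.wf
  | .susp t ol nl e => t.wf ∧ e.wf ∧ e.len = ol ∧ e.lev ≤ nl
/-- Well-formedness of suspension environments. -/
def SEnv.wf : SEnv → Prop
  | .nil => True
  | .cons t n e => t.wf ∧ e.wf ∧ e.lev ≤ n
  | .merge e1 nl1 ol2 e2 => e1.wf ∧ e2.wf ∧ e2.len = ol2 ∧ e1.lev ≤ nl1
end

/-- A simple environment: no merged environments on the top spine. -/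
def SEnv.simple : SEnv → Prop
  | .nil => True
  | .cons _ _ e => e.simple
  | .merge _ _ _ _ => False

mutual
/-- One step of the reading rules (r1)-(r6) and merging rules (m1)-(m6),
applied anywhere (compatible closure). -/
inductive StepT : STerm → STerm → Prop
  | r1 : ∀ (c ol nl : ℕ) (e : SEnv), StepT (.susp (.const c) ol nl e) (.const c)
  | r2 : ∀ (i nl : ℕ), StepT (.susp (.var i) 0 nl .nil) (.var (i + nl))
  | r3 : ∀ (ol nl : ℕ) (t : STerm) (l : ℕ) (e : SEnv),
      StepT (.susp (.var 1) ol nl (.cons t l e)) (.susp t 0 (nl - l) .nil)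
  | r4 : ∀ (i ol nl : ℕ) (t : STerm) (l : ℕ) (e : SEnv), 1 < i →
      StepT (.susp (.var i) ol nl (.cons t l e)) (.susp (.var (i - 1)) (ol - 1) nl e)
  | r5 : ∀ (t1 t2 : STerm) (ol nl : ℕ) (e : SEnv),
      StepT (.susp (.app t1 t2) ol nl e) (.app (.susp t1 ol nl e) (.susp t2 ol nl e))
  | r6 : ∀ (t : STerm) (ol nl : ℕ) (e : SEnv),
      StepT (.susp (.lam t) ol nl e)
            (.lam (.susp t (ol + 1) (nl + 1) (.cons (.var 1) (nl + 1) e)))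
  | m1 : ∀ (t : STerm) (ol1 nl1 : ℕ) (e1 : SEnv) (ol2 nl2 : ℕ) (e2 : SEnv),
      StepT (.susp (.susp t ol1 nl1 e1) ol2 nl2 e2)
            (.susp t (ol1 + (ol2 - nl1)) (nl2 + (nl1 - ol2)) (.merge e1 nl1 ol2 e2))
  | appL : ∀ (t1 t1' t2 : STerm), StepT t1 t1' → StepT (.app t1 t2) (.app t1' t2)
  | appR : ∀ (t1 t2 t2' : STerm), StepT t2 t2' → StepT (.app t1 t2) (.app t1 t2')
  | lamC : ∀ (t t' : STerm), StepT t t' → StepT (.lam t) (.lam t')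
  | suspT : ∀ (t t' : STerm) (ol nl : ℕ) (e : SEnv),
      StepT t t' → StepT (.susp t ol nl e) (.susp t' ol nl e)
  | suspE : ∀ (t : STerm) (ol nl : ℕ) (e e' : SEnv),
      StepE e e' → StepT (.susp t ol nl e) (.susp t ol nl e')
inductive StepE : SEnv → SEnv → Prop
  | m2 : ∀ (e1 : SEnv) (nl1 : ℕ), StepE (.merge e1 nl1 0 .nil) e1
  | m3 : ∀ (ol2 : ℕ) (e2 : SEnv), StepE (.merge .nil 0 ol2 e2) e2
  | m4 : ∀ (nl1 ol2 : ℕ) (t : STerm) (l : ℕ) (e2 : SEnv), 1 ≤ nl1 →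
      StepE (.merge .nil nl1 ol2 (.cons t l e2)) (.merge .nil (nl1 - 1) (ol2 - 1) e2)
  | m5 : ∀ (t : STerm) (n : ℕ) (e1 : SEnv) (nl1 ol2 : ℕ) (s : STerm) (l : ℕ) (e2 : SEnv),
      n < nl1 →
      StepE (.merge (.cons t n e1) nl1 ol2 (.cons s l e2))
            (.merge (.cons t n e1) (nl1 - 1) (ol2 - 1) e2)
  | m6 : ∀ (t : STerm) (n : ℕ) (e1 : SEnv) (ol2 : ℕ) (s : STerm) (l : ℕ) (e2 : SEnv),
      StepE (.merge (.cons t n e1) n ol2 (.cons s l e2))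
            (.cons (.susp t ol2 l (.cons s l e2)) (l + (n - ol2))
                   (.merge e1 n ol2 (.cons s l e2)))
  | consT : ∀ (t t' : STerm) (n : ℕ) (e : SEnv),
      StepT t t' → StepE (.cons t n e) (.cons t' n e)
  | consE : ∀ (t : STerm) (n : ℕ) (e e' : SEnv),
      StepE e e' → StepE (.cons t n e) (.cons t n e')
  | mergeL : ∀ (e1 e1' : SEnv) (nl1 ol2 : ℕ) (e2 : SEnv),
      StepE e1 e1' → StepE (.merge e1 nl1 ol2 e2) (.merge e1' nl1 ol2 e2)
  | mergeR : ∀ (e1 : SEnv) (nl1 ol2 : ℕ) (e2 e2' : SEnv),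
      StepE e2 e2' → StepE (.merge e1 nl1 ol2 e2) (.merge e1 nl1 ol2 e2')
end

/-!
On simple environments, i.e. lists of entries `(t, l)`, the merging rules (m2)–(m6) are
deterministic and compute a function `mergeList`; every well-formed environment reduces to the
simple environment `flatten e` obtained by evaluating its merges bottom-up. So `B` reduces to
`mergeList f₁ nl₁ (ol₂ + (ol₃ ∸ nl₂)) (mergeList f₂ nl₂ ol₃ f₃)` for the flattenings `fᵢ` of
the `eᵢ`, and it remains to reduce `A` to the same list. After flattening the inner merge, this
goes by induction along `mergeList`: (m4)/(m5) steps of the outer merge mirror those of the inner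
ones, and when (m6) fires on both levels, (m1) composes the two suspensions of the head entry
into one over the merged environment, which is again evaluated by `mergeList`.
-/

open Relation

local infix:50 " ▷* " => ReflTransGen StepE

namespace SEnv

-- Simple environments are represented by the list of their entries.
def ofList : List (STerm × ℕ) → SEnv
  | [] => nil
  | (t, n) :: l => cons t n (ofList l)

@[simp] lemma ofList_nil : ofList [] = nil := rfl

@[simp] lemma ofList_cons (t : STerm) (n : ℕ) (l : List (STerm × ℕ)) :
    ofList ((t, n) :: l) = cons t n (ofList l) := rfl

lemma simple_ofList : ∀ l : List (STerm × ℕ), (ofList l).simple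
  | [] => trivial
  | (_, _) :: l => simple_ofList l

@[simp] lemma len_ofList : ∀ l : List (STerm × ℕ), (ofList l).len = l.length
  | [] => rfl
  | (_, _) :: l => by simp [len, len_ofList l, Nat.add_comm]

@[simp] lemma lev_nil : nil.lev = 0 := rfl

@[simp] lemma lev_cons (t : STerm) (n : ℕ) (e : SEnv) : (cons t n e).lev = n := rfl

-- The part of well-formedness that the merging rules depend on: levels decrease along the spine.
def Graded : List (STerm × ℕ) → Prop
  | [] => True
  | (_, n) :: l => (ofList l).lev ≤ n ∧ Graded l

@[simp] lemma graded_cons (t : STerm) (n : ℕ) (l : List (STerm × ℕ)) :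
    Graded ((t, n) :: l) ↔ (ofList l).lev ≤ n ∧ Graded l := Iff.rfl

/-- The simple environment that the merging rules (m2)–(m6) compute from
`⟦ofList e₁, nl₁, ol₂, ofList e₂⟧`. The `else` branch is (m6) only when `n = nl₁`, which
well-formedness (`n ≤ nl₁`) guarantees. -/
def mergeList : List (STerm × ℕ) → ℕ → ℕ → List (STerm × ℕ) → List (STerm × ℕ)
  | e₁, _, _, [] => e₁
  | [], 0, _, e₂ => e₂
  | [], nl₁ + 1, ol₂, _ :: e₂ => mergeList [] nl₁ (ol₂ - 1) e₂
  | (t, n) :: e₁, nl₁, ol₂, (s, l) :: e₂ =>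
      if n < nl₁ then mergeList ((t, n) :: e₁) (nl₁ - 1) (ol₂ - 1) e₂
      else (.susp t ol₂ l (ofList ((s, l) :: e₂)), l + (n - ol₂)) ::
        mergeList e₁ n ol₂ ((s, l) :: e₂)
termination_by e₁ _ _ e₂ => e₁.length + e₂.length

@[simp] lemma mergeList_nil_right (e₁ : List (STerm × ℕ)) (nl₁ ol₂ : ℕ) :
    mergeList e₁ nl₁ ol₂ [] = e₁ := by
  cases e₁ <;> simp [mergeList]

lemma mergeList_nil_left :
    ∀ (k ol : ℕ) (e : List (STerm × ℕ)), mergeList [] k ol e = e.drop k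
  | _, _, [] => by simp
  | 0, _, _ :: _ => by simp [mergeList]
  | k + 1, ol, _ :: e => by simp [mergeList, mergeList_nil_left k (ol - 1) e]

lemma mergeList_cons_cons (t : STerm) (n : ℕ) (e₁ : List (STerm × ℕ)) (nl₁ ol₂ : ℕ)
    (s : STerm) (l : ℕ) (e₂ : List (STerm × ℕ)) :
    mergeList ((t, n) :: e₁) nl₁ ol₂ ((s, l) :: e₂) =
      if n < nl₁ then mergeList ((t, n) :: e₁) (nl₁ - 1) (ol₂ - 1) e₂
      else (.susp t ol₂ l (ofList ((s, l) :: e₂)), l + (n - ol₂)) ::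
        mergeList e₁ n ol₂ ((s, l) :: e₂) := by
  rw [mergeList]

lemma length_mergeList (e₁ : List (STerm × ℕ)) (nl₁ ol₂ : ℕ) (e₂ : List (STerm × ℕ)) :
    Graded e₁ → (ofList e₁).lev ≤ nl₁ → e₂.length = ol₂ →
      (mergeList e₁ nl₁ ol₂ e₂).length = e₁.length + (ol₂ - nl₁) := by
  fun_induction mergeList e₁ nl₁ ol₂ e₂ <;> intro hg hlev hlen <;> simp_all <;> omega

lemma lev_mergeList_le (e₁ : List (STerm × ℕ)) (nl₁ ol₂ : ℕ) (e₂ : List (STerm × ℕ)) :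
    (ofList e₁).lev ≤ nl₁ → Graded e₂ → e₂.length = ol₂ →
      (ofList (mergeList e₁ nl₁ ol₂ e₂)).lev ≤ (ofList e₂).lev + (nl₁ - ol₂) := by
  fun_induction mergeList e₁ nl₁ ol₂ e₂ with
  | case1 => intro hlev _ hlen; simp only [← hlen, List.length_nil, ofList_nil, lev_nil]; omega
  | case2 => simp
  | case3 nl₁ ol₂ x e₂ ih =>
    obtain ⟨s, l⟩ := x
    intro _ hg hlen
    simp only [graded_cons, ofList_cons, lev_cons, List.length_cons] at hg hlen ⊢
    have := ih (Nat.zero_le _) hg.2 (by omega)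
    omega
  | case4 t n e₁ nl₁ ol₂ s l e₂ hlt ih =>
    intro _ hg hlen
    simp only [graded_cons, ofList_cons, lev_cons, List.length_cons] at hg hlen ⊢
    have := ih (by simp; omega) hg.2 (by omega)
    omega
  | case5 t n e₁ nl₁ ol₂ s l e₂ hge ih =>
    intro hlev _ _
    simp only [ofList_cons, lev_cons] at hlev ⊢
    omega

lemma graded_mergeList (e₁ : List (STerm × ℕ)) (nl₁ ol₂ : ℕ) (e₂ : List (STerm × ℕ)) :
    Graded e₁ → Graded e₂ → (ofList e₁).lev ≤ nl₁ → e₂.length = ol₂ →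
      Graded (mergeList e₁ nl₁ ol₂ e₂) := by
  fun_induction mergeList e₁ nl₁ ol₂ e₂ with
  | case5 t n e₁ nl₁ ol₂ s l e₂ hge ih =>
    intro hg₁ hg₂ hlev hlen
    rw [graded_cons] at hg₁ ⊢
    refine ⟨?_, ih hg₁.2 hg₂ hg₁.1 hlen⟩
    simpa using lev_mergeList_le e₁ n ol₂ _ hg₁.1 hg₂ hlen
  | case1 => intro hg₁; simp [hg₁]
  | case2 => intro _ hg₂; simp [hg₂]
  | case3 nl₁ ol₂ x e₂ ih =>
    obtain ⟨s, l⟩ := x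
    intro _ hg₂ _ hlen
    exact ih trivial hg₂.2 (Nat.zero_le _) (by simp at hlen; omega)
  | case4 t n e₁ nl₁ ol₂ s l e₂ hlt ih =>
    intro hg₁ hg₂ _ hlen
    exact ih hg₁ hg₂.2 (by simp; omega) (by simp at hlen; omega)

lemma rtc_consT (n : ℕ) (e : SEnv) {t t' : STerm} (h : ReflTransGen StepT t t') :
    cons t n e ▷* cons t' n e :=
  h.lift _ fun _ _ hs => StepE.consT _ _ n e hs

lemma rtc_consE (t : STerm) (n : ℕ) {e e' : SEnv} (h : e ▷* e') : cons t n e ▷* cons t n e' :=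
  h.lift _ fun _ _ hs => StepE.consE t n _ _ hs

lemma rtc_mergeL (nl₁ ol₂ : ℕ) (e₂ : SEnv) {e₁ e₁' : SEnv} (h : e₁ ▷* e₁') :
    merge e₁ nl₁ ol₂ e₂ ▷* merge e₁' nl₁ ol₂ e₂ :=
  h.lift _ fun _ _ hs => StepE.mergeL _ _ nl₁ ol₂ e₂ hs

lemma rtc_mergeR (e₁ : SEnv) (nl₁ ol₂ : ℕ) {e₂ e₂' : SEnv} (h : e₂ ▷* e₂') :
    merge e₁ nl₁ ol₂ e₂ ▷* merge e₁ nl₁ ol₂ e₂' :=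
  h.lift _ fun _ _ hs => StepE.mergeR e₁ nl₁ ol₂ _ _ hs

lemma rtc_suspE (t : STerm) (ol nl : ℕ) {e e' : SEnv} (h : e ▷* e') :
    ReflTransGen StepT (.susp t ol nl e) (.susp t ol nl e') :=
  h.lift _ fun _ _ hs => StepT.suspE t ol nl _ _ hs

lemma stepE_merge_ofList_of_lev_lt (e₁ : List (STerm × ℕ)) {nl₁ : ℕ} (ol₂ : ℕ) (s : STerm)
    (l : ℕ) (e₂ : SEnv) (hlev : (ofList e₁).lev < nl₁) :
    StepE (merge (ofList e₁) nl₁ ol₂ (cons s l e₂)) (merge (ofList e₁) (nl₁ - 1) (ol₂ - 1) e₂) := by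
  match e₁ with
  | [] => exact StepE.m4 nl₁ ol₂ s l e₂ hlev
  | (t, n) :: e₁ => exact StepE.m5 t n (ofList e₁) nl₁ ol₂ s l e₂ hlev

lemma merge_ofList_reduces (e₁ : List (STerm × ℕ)) (nl₁ ol₂ : ℕ) (e₂ : List (STerm × ℕ)) :
    Graded e₁ → (ofList e₁).lev ≤ nl₁ → e₂.length = ol₂ →
      merge (ofList e₁) nl₁ ol₂ (ofList e₂) ▷* ofList (mergeList e₁ nl₁ ol₂ e₂) := by
  fun_induction mergeList e₁ nl₁ ol₂ e₂ with
  | case1 e₁ nl₁ ol₂ =>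
    rintro - - rfl
    exact .single (StepE.m2 _ nl₁)
  | case2 ol₂ e₂ => exact fun _ _ _ => .single (StepE.m3 ol₂ _)
  | case3 nl₁ ol₂ x e₂ ih =>
    obtain ⟨s, l⟩ := x
    intro _ _ hlen
    refine .head (stepE_merge_ofList_of_lev_lt [] ol₂ s l _ (Nat.succ_pos nl₁)) ?_
    exact ih trivial (Nat.zero_le _) (by simp at hlen; omega)
  | case4 t n e₁ nl₁ ol₂ s l e₂ hlt ih =>
    intro hg₁ _ hlen
    refine .head (stepE_merge_ofList_of_lev_lt ((t, n) :: e₁) ol₂ s l _ hlt) ?_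
    exact ih hg₁ (by simp; omega) (by simp at hlen; omega)
  | case5 t n e₁ nl₁ ol₂ s l e₂ hge ih =>
    intro hg₁ hlev hlen
    obtain rfl : nl₁ = n := le_antisymm (not_lt.mp hge) hlev
    exact .head (StepE.m6 t nl₁ (ofList e₁) ol₂ s l (ofList e₂))
      (rtc_consE _ _ (ih hg₁.2 hg₁.1 hlen))

lemma mergeList_of_lev_lt (e₁ : List (STerm × ℕ)) {nl₁ : ℕ} (ol₂ : ℕ) (x : STerm × ℕ)
    (e₂ : List (STerm × ℕ)) (hlev : (ofList e₁).lev < nl₁) :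
    mergeList e₁ nl₁ ol₂ (x :: e₂) = mergeList e₁ (nl₁ - 1) (ol₂ - 1) e₂ := by
  match e₁, nl₁, x with
  | [], _ + 1, _ => simp [mergeList_nil_left]
  | (t, n) :: e₁, _, (s, l) => simp_all [mergeList_cons_cons]

lemma mergeList_cons_self (t : STerm) (n : ℕ) (e₁ : List (STerm × ℕ)) (ol₂ : ℕ) (s : STerm)
    (l : ℕ) (e₂ : List (STerm × ℕ)) :
    mergeList ((t, n) :: e₁) n ol₂ ((s, l) :: e₂) =
      (.susp t ol₂ l (ofList ((s, l) :: e₂)), l + (n - ol₂)) ::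
        mergeList e₁ n ol₂ ((s, l) :: e₂) := by
  simp [mergeList_cons_cons]

lemma mergeList_add_drop (e₁ : List (STerm × ℕ)) {nl₁ : ℕ} (hlev : (ofList e₁).lev ≤ nl₁) :
    ∀ (k ol : ℕ) (e : List (STerm × ℕ)),
      mergeList e₁ (nl₁ + k) ol e = mergeList e₁ nl₁ (ol - k) (e.drop k)
  | 0, _, _ => rfl
  | _ + 1, _, [] => by simp
  | k + 1, ol, x :: e => by
    rw [mergeList_of_lev_lt e₁ ol x e (by omega), List.drop_succ_cons,
      show nl₁ + (k + 1) - 1 = nl₁ + k by omega, show ol - (k + 1) = ol - 1 - k by omega]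
    exact mergeList_add_drop e₁ hlev k (ol - 1) e

lemma susp_susp_ofList_reduces (t : STerm) (ol₂ nl₂ ol₃ l₃ : ℕ) (e₂ e₃ : List (STerm × ℕ))
    (hg₂ : Graded e₂) (hlev₂ : (ofList e₂).lev ≤ nl₂) (hlen₃ : e₃.length = ol₃) :
    ReflTransGen StepT (.susp (.susp t ol₂ nl₂ (ofList e₂)) ol₃ l₃ (ofList e₃))
      (.susp t (ol₂ + (ol₃ - nl₂)) (l₃ + (nl₂ - ol₃)) (ofList (mergeList e₂ nl₂ ol₃ e₃))) :=
  .head (StepT.m1 ..) (rtc_suspE _ _ _ (merge_ofList_reduces e₂ nl₂ ol₃ e₃ hg₂ hlev₂ hlen₃))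

lemma merge_ofList_add_reduces (e₁ : List (STerm × ℕ)) (nl₁ k ol : ℕ) (e : List (STerm × ℕ))
    (hg₁ : Graded e₁) (hlev₁ : (ofList e₁).lev ≤ nl₁) (hlen : e.length = ol) :
    merge (ofList e₁) (nl₁ + k) ol (ofList e) ▷* ofList (mergeList e₁ nl₁ (ol - k) (e.drop k)) :=
  mergeList_add_drop e₁ hlev₁ k ol e ▸
    merge_ofList_reduces e₁ (nl₁ + k) ol e hg₁ (hlev₁.trans (Nat.le_add_right _ _)) hlen

theorem merge_mergeList_reduces (e₁ : List (STerm × ℕ)) (nl₁ ol₂ : ℕ) (e₂ : List (STerm × ℕ))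
    (nl₂ ol₃ : ℕ) (e₃ : List (STerm × ℕ)) (hg₁ : Graded e₁) (hg₂ : Graded e₂)
    (hlev₁ : (ofList e₁).lev ≤ nl₁) (hlev₂ : (ofList e₂).lev ≤ nl₂)
    (hlen₂ : e₂.length = ol₂) (hlen₃ : e₃.length = ol₃) :
    merge (ofList (mergeList e₁ nl₁ ol₂ e₂)) (nl₂ + (nl₁ - ol₂)) ol₃ (ofList e₃) ▷*
      ofList (mergeList e₁ nl₁ (ol₂ + (ol₃ - nl₂)) (mergeList e₂ nl₂ ol₃ e₃)) := by
  match e₂, e₃ with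
  | [], e₃ =>
    obtain rfl : ol₂ = 0 := hlen₂.symm
    simpa [mergeList_nil_left, Nat.add_comm nl₂] using
      merge_ofList_add_reduces e₁ nl₁ nl₂ ol₃ e₃ hg₁ hlev₁ hlen₃
  | _ :: _, [] =>
    subst hlen₃
    simpa using ReflTransGen.single (StepE.m2 _ _)
  | (s₂, l₂) :: e₂, (s₃, l₃) :: e₃ =>
    have hlevX := lev_mergeList_le e₁ nl₁ ol₂ _ hlev₁ hg₂ hlen₂
    simp only [ofList_cons, lev_cons, List.length_cons] at hlev₂ hlen₂ hlen₃ hlevX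
    rcases hlev₂.lt_or_eq with hlt₂ | rfl
    · refine .head (stepE_merge_ofList_of_lev_lt _ ol₃ s₃ l₃ _ (by omega)) ?_
      rw [mergeList_of_lev_lt ((s₂, l₂) :: e₂) ol₃ (s₃, l₃) e₃ hlt₂,
        show nl₂ + (nl₁ - ol₂) - 1 = nl₂ - 1 + (nl₁ - ol₂) by omega,
        show ol₂ + (ol₃ - nl₂) = ol₂ + (ol₃ - 1 - (nl₂ - 1)) by omega]
      exact merge_mergeList_reduces e₁ nl₁ ol₂ _ (nl₂ - 1) (ol₃ - 1) e₃ hg₁ hg₂ hlev₁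
        (by simp; omega) (by simp; omega) (by omega)
    have hY := mergeList_cons_self s₂ l₂ e₂ ol₃ s₃ l₃ e₃
    rcases hlev₁.lt_or_eq with hlt₁ | hlev₁
    · rw [mergeList_of_lev_lt e₁ ol₂ _ e₂ hlt₁, hY, mergeList_of_lev_lt e₁ _ _ _ hlt₁,
        show l₂ + (nl₁ - ol₂) = l₂ + (nl₁ - 1 - (ol₂ - 1)) by omega,
        show ol₂ + (ol₃ - l₂) - 1 = ol₂ - 1 + (ol₃ - l₂) by omega]
      exact merge_mergeList_reduces e₁ (nl₁ - 1) (ol₂ - 1) e₂ l₂ ol₃ _ hg₁ hg₂.2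
        (by omega) hg₂.1 (by omega) hlen₃
    match e₁, hg₁, hlev₁ with
    | [], _, hlev₁ =>
      obtain rfl : nl₁ = 0 := hlev₁.symm
      simpa [mergeList_nil_left] using
        merge_ofList_reduces _ l₂ ol₃ ((s₃, l₃) :: e₃) hg₂ le_rfl hlen₃
    | (t, n) :: e₁, hg₁, hlev₁ =>
      obtain rfl : n = nl₁ := hlev₁
      rw [mergeList_cons_self, hY, mergeList_cons_self, ← hY,
        show l₃ + (l₂ - ol₃) + (n - (ol₂ + (ol₃ - l₂))) = l₃ + (l₂ + (n - ol₂) - ol₃) by omega]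
      refine .head (StepE.m6 ..) ((rtc_consT _ _ ?_).trans (rtc_consE _ _ ?_))
      · exact susp_susp_ofList_reduces t ol₂ l₂ ol₃ l₃ _ ((s₃, l₃) :: e₃) hg₂ le_rfl hlen₃
      · exact merge_mergeList_reduces e₁ n ol₂ _ l₂ ol₃ ((s₃, l₃) :: e₃) hg₁.2 hg₂ hg₁.1 le_rfl
          hlen₂ hlen₃
termination_by e₁.length + e₂.length + e₃.length

def flatten : SEnv → List (STerm × ℕ)
  | nil => []
  | cons t n e => (t, n) :: flatten e
  | merge e₁ nl₁ ol₂ e₂ => mergeList (flatten e₁) nl₁ ol₂ (flatten e₂)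

lemma flatten_spec : ∀ e : SEnv, e.wf →
    Graded (flatten e) ∧ (flatten e).length = e.len ∧ (ofList (flatten e)).lev ≤ e.lev
  | nil, _ => ⟨trivial, rfl, le_rfl⟩
  | cons t n e, ⟨_, he, hlev⟩ => by
    obtain ⟨hg, hlen, hlev'⟩ := flatten_spec e he
    exact ⟨⟨hlev'.trans hlev, hg⟩, by simp [flatten, len, hlen, Nat.add_comm], le_rfl⟩
  | merge e₁ nl₁ ol₂ e₂, ⟨he₁, he₂, hlen, hlev⟩ => by
    obtain ⟨hg₁, hlen₁, hlev₁⟩ := flatten_spec e₁ he₁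
    obtain ⟨hg₂, hlen₂, hlev₂⟩ := flatten_spec e₂ he₂
    have hl₁ := hlev₁.trans hlev
    have hl₂ := hlen₂.trans hlen
    refine ⟨graded_mergeList _ _ _ _ hg₁ hg₂ hl₁ hl₂, ?_, ?_⟩
    · rw [flatten, length_mergeList _ _ _ _ hg₁ hl₁ hl₂, hlen₁, len]
    · have := lev_mergeList_le _ _ _ _ hl₁ hg₂ hl₂
      simp only [flatten, lev]
      omega

lemma reduces_ofList_flatten : ∀ e : SEnv, e.wf → e ▷* ofList (flatten e)
  | nil, _ => .refl
  | cons t n e, ⟨_, he, _⟩ => rtc_consE t n (reduces_ofList_flatten e he)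
  | merge e₁ nl₁ ol₂ e₂, ⟨he₁, he₂, hlen, hlev⟩ => by
    obtain ⟨hg₁, -, hlev₁⟩ := flatten_spec e₁ he₁
    obtain ⟨-, hlen₂, -⟩ := flatten_spec e₂ he₂
    exact (rtc_mergeL _ _ _ (reduces_ofList_flatten e₁ he₁)).trans <|
      (rtc_mergeR _ _ _ (reduces_ofList_flatten e₂ he₂)).trans <|
      merge_ofList_reduces _ _ _ _ hg₁ (hlev₁.trans hlev) (hlen₂.trans hlen)

end SEnv

/-- associativity of environment merging. -/
theorem stmt5 (e1 e2 e3 : SEnv) (nl1 ol2 nl2 ol3 : ℕ)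
    (he1 : e1.wf) (he2 : e2.wf) (he3 : e3.wf)
    (hA : (SEnv.merge (SEnv.merge e1 nl1 ol2 e2) (nl2 + (nl1 - ol2)) ol3 e3).wf)
    (hB : (SEnv.merge e1 nl1 (ol2 + (ol3 - nl2)) (SEnv.merge e2 nl2 ol3 e3)).wf) :
    ∃ C : SEnv, C.simple ∧
      Relation.ReflTransGen StepE
        (SEnv.merge (SEnv.merge e1 nl1 ol2 e2) (nl2 + (nl1 - ol2)) ol3 e3) C ∧
      Relation.ReflTransGen StepE
        (SEnv.merge e1 nl1 (ol2 + (ol3 - nl2)) (SEnv.merge e2 nl2 ol3 e3)) C := by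
  open SEnv in
  obtain ⟨he12, -, hlen3, -⟩ := hA
  obtain ⟨-, -, hlen2, hlev1⟩ := id he12
  obtain ⟨-, ⟨-, -, -, hlev2⟩, -, -⟩ := id hB
  obtain ⟨hg1, -, hl1⟩ := flatten_spec e1 he1
  obtain ⟨hg2, hn2, hl2⟩ := flatten_spec e2 he2
  obtain ⟨-, hn3, -⟩ := flatten_spec e3 he3
  refine ⟨ofList (flatten (.merge e1 nl1 (ol2 + (ol3 - nl2)) (.merge e2 nl2 ol3 e3))),
    simple_ofList _, ?_, reduces_ofList_flatten _ hB⟩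
  exact (rtc_mergeL _ _ _ (reduces_ofList_flatten _ he12)).trans <|
    (rtc_mergeR _ _ _ (reduces_ofList_flatten e3 he3)).trans <|
    merge_mergeList_reduces _ nl1 ol2 _ nl2 ol3 _ hg1 hg2 (hl1.trans hlev1) (hl2.trans hlev2)
      (hn2.trans hlen2) (hn3.trans hlen3)
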